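/- Let F : ℝ^d → ℝ^d be bounded-Lipschitz with constants L, D, and let i be a uniformly random index in {1, ..., d}, independent of z, w. Define the coordinate estimator g = d·[F(z)]_i e_i - d·[F(w)]_i e_i + F(w), where e_i is the i-th standard basis vector. Then E[g] = F(z) (over the randomness of i for fixed z, w) and E‖g - F(w)‖² ≤ d L² E‖z - w‖² + d D². -/

import Mathlib

/-!
Only the `i`-th coordinate of `g i - F w` survives, and it equals `d ([F z]_i - [F w]_i)`.
Averaging over `i` the coordinates `d ([F z]_i - [F w]_i) e_i` reassemble `F z - F w`, which gives
unbiasedness; averaging their squared norms gives `d ‖F z - F w‖²`, and the bounded-Lipschitz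
condition bounds this by `d L² ‖z - w‖² + d D²`.
-/

open Finset

namespace EuclideanSpace

variable {ι : Type*} [DecidableEq ι]

/-- With `c = d`, `u = F z`, `v = F w` this is the estimator `g` evaluated at the random index `i`;
expectations over `i` become averages `(card ι)⁻¹ * ∑ i`. -/
noncomputable def coordinateEstimator (c : ℝ) (u v : EuclideanSpace ℝ ι) (i : ι) :
    EuclideanSpace ℝ ι :=
  c • single i (u i) - c • single i (v i) + v

variable (c : ℝ) (u v : EuclideanSpace ℝ ι)

lemma coordinateEstimator_sub_right (i : ι) :
    coordinateEstimator c u v i - v = c • single i (u i - v i) := by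
  rw [coordinateEstimator, add_sub_cancel_right, ← smul_sub, ← PiLp.single_sub]

variable [Fintype ι]

lemma sum_single_apply : ∑ i, single i (v i) = v := by
  ext j
  simp

lemma sum_coordinateEstimator :
    ∑ i, coordinateEstimator c u v i = c • (u - v) + (Fintype.card ι : ℝ) • v := by
  simp only [coordinateEstimator, sum_add_distrib, sum_sub_distrib, ← smul_sum, sum_single_apply,
    sum_const, card_univ, smul_sub, Nat.cast_smul_eq_nsmul]

lemma inv_card_smul_sum_coordinateEstimator :
    (Fintype.card ι : ℝ)⁻¹ • ∑ i, coordinateEstimator (Fintype.card ι) u v i = u := by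
  rcases isEmpty_or_nonempty ι with hι | hι
  · exact Subsingleton.elim _ _
  · have hcard : (Fintype.card ι : ℝ) ≠ 0 := by positivity
    rw [sum_coordinateEstimator, ← smul_add, sub_add_cancel, inv_smul_smul₀ hcard]

lemma sum_norm_coordinateEstimator_sub_sq :
    ∑ i, ‖coordinateEstimator c u v i - v‖ ^ 2 = c ^ 2 * ‖u - v‖ ^ 2 := by
  simp only [coordinateEstimator_sub_right, norm_smul, mul_pow, PiLp.norm_single, Real.norm_eq_abs,
    sq_abs, ← mul_sum, real_norm_sq_eq, PiLp.sub_apply]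

lemma inv_card_mul_sum_norm_coordinateEstimator_sub_sq :
    (Fintype.card ι : ℝ)⁻¹ * ∑ i, ‖coordinateEstimator (Fintype.card ι) u v i - v‖ ^ 2
      = Fintype.card ι * ‖u - v‖ ^ 2 := by
  rw [sum_norm_coordinateEstimator_sub_sq, ← mul_assoc, sq, ← mul_assoc, inv_mul_mul_self]

end EuclideanSpace

theorem stmt_11_general {d : ℕ}
    (F : EuclideanSpace ℝ (Fin d) → EuclideanSpace ℝ (Fin d))
    (L D : ℝ)
    (hF : ∀ z₁ z₂, ‖F z₁ - F z₂‖ ^ 2 ≤ L ^ 2 * ‖z₁ - z₂‖ ^ 2 + D ^ 2)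
    (z w : EuclideanSpace ℝ (Fin d))
    (g : Fin d → EuclideanSpace ℝ (Fin d))
    (hg : ∀ i, g i = (d : ℝ) • EuclideanSpace.single i (F z i)
        - (d : ℝ) • EuclideanSpace.single i (F w i) + F w) :
    (d : ℝ)⁻¹ • ∑ i, g i = F z ∧
    (d : ℝ)⁻¹ * ∑ i, ‖g i - F w‖ ^ 2 ≤ d * L ^ 2 * ‖z - w‖ ^ 2 + d * D ^ 2 := by
  obtain rfl : g = EuclideanSpace.coordinateEstimator d (F z) (F w) := funext hg
  have hmean := EuclideanSpace.inv_card_smul_sum_coordinateEstimator (F z) (F w)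
  have hsecond := EuclideanSpace.inv_card_mul_sum_norm_coordinateEstimator_sub_sq (F z) (F w)
  rw [Fintype.card_fin] at hmean hsecond
  refine ⟨hmean, ?_⟩
  rw [hsecond]
  calc (d : ℝ) * ‖F z - F w‖ ^ 2 ≤ d * (L ^ 2 * ‖z - w‖ ^ 2 + D ^ 2) := by gcongr; exact hF z w
    _ = d * L ^ 2 * ‖z - w‖ ^ 2 + d * D ^ 2 := by ring

/-- Lemma 5 bounds for the coordinate estimator: unbiasedness and the
second-moment bound `A = dL²`, `D₁ = dD²`. -/
theorem stmt_11 {d : ℕ} (hd : 0 < d)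
    (F : EuclideanSpace ℝ (Fin d) → EuclideanSpace ℝ (Fin d))
    (L D : ℝ)
    (hF : ∀ z₁ z₂, ‖F z₁ - F z₂‖ ^ 2 ≤ L ^ 2 * ‖z₁ - z₂‖ ^ 2 + D ^ 2)
    (z w : EuclideanSpace ℝ (Fin d))
    (g : Fin d → EuclideanSpace ℝ (Fin d))
    (hg : ∀ i, g i = (d : ℝ) • EuclideanSpace.single i (F z i)
        - (d : ℝ) • EuclideanSpace.single i (F w i) + F w) :
    (d : ℝ)⁻¹ • ∑ i, g i = F z ∧
    (d : ℝ)⁻¹ * ∑ i, ‖g i - F w‖ ^ 2 ≤ d * L ^ 2 * ‖z - w‖ ^ 2 + d * D ^ 2 :=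
  stmt_11_general F L D hF z w g hg
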